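/- arXiv:2506.15274 — 6 statements merged into one kernel-verified Lean document; each statement's English description precedes it below -/
import Mathlib

section
/- Let 0 < a ≤ 1/√3 and β ≥ -2√3 - 6·log(1 - 1/√3). Then for all x ∈ [0, 2π], exp(β·a² + 2a·cos x) ≥ 1/(1 + a² - 2a·cos x). -/
/-!
With `c = cos x` and `t = 1 + a² - 2ac ∈ [(1-a)², (1+a)²]`, the claim reads
`β a² + 1 + a² + (log t - t) ≥ 0`. Since `log t - t` is concave, it is smallest at an endpoint,
and `log (1+a) - log (1-a) ≥ 2a` shows that this is `t = (1-a)²`, i.e. `c = 1`. There the claim is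
`β ≥ 2 (-log (1-a) - a) / a² = 2 ∑ aⁿ / (n+2)`, which increases in `a`; the bound on `β` is this
function at `a = 1/√3`.
-/

open Real Set

theorem hasSum_pow_div_add_two_of_abs_lt_one {x : ℝ} (hx0 : x ≠ 0) (hx : |x| < 1) :
    HasSum (fun n : ℕ => x ^ n / (n + 2)) ((-log (1 - x) - x) / x ^ 2) := by
  have h := (hasSum_nat_add_iff' 1).mpr (hasSum_pow_div_log_of_abs_lt_one hx)
  simp only [Finset.sum_range_one, pow_one, Nat.cast_zero, zero_add, div_one] at h
  refine (h.div_const (x ^ 2)).congr_fun fun n => ?_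
  push_cast
  field_simp
  ring

theorem neg_log_one_sub_sub_div_sq_le {a b : ℝ} (ha : 0 < a) (hab : a ≤ b) (hb : b < 1) :
    (-log (1 - a) - a) / a ^ 2 ≤ (-log (1 - b) - b) / b ^ 2 :=
  hasSum_le (fun n => by gcongr)
    (hasSum_pow_div_add_two_of_abs_lt_one ha.ne' (abs_lt.2 ⟨by linarith, by linarith⟩))
    (hasSum_pow_div_add_two_of_abs_lt_one (ha.trans_le hab).ne'
      (abs_lt.2 ⟨by linarith, by linarith⟩))

theorem neg_two_mul_add_log_one_sub_le {a b β : ℝ} (ha : 0 < a) (hab : a ≤ b) (hb : b < 1)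
    (hβ : 2 * ((-log (1 - b) - b) / b ^ 2) ≤ β) :
    -2 * (a + log (1 - a)) ≤ β * a ^ 2 := by
  have hmono := neg_log_one_sub_sub_div_sq_le ha hab hb
  calc -2 * (a + log (1 - a)) = 2 * ((-log (1 - a) - a) / a ^ 2) * a ^ 2 := by
        field_simp; ring
    _ ≤ β * a ^ 2 := by gcongr; linarith

theorem two_mul_le_log_one_add_sub_log_one_sub {x : ℝ} (hx0 : 0 ≤ x) (hx : x < 1) :
    2 * x ≤ log (1 + x) - log (1 - x) := by
  have h := le_hasSum (hasSum_log_sub_log_of_abs_lt_one (abs_lt.2 ⟨by linarith, hx⟩)) 0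
    fun k _ => by positivity
  simpa using h

theorem log_sub_self_ge_min {u v t : ℝ} (hu : 0 < u) (ht : t ∈ Icc u v) :
    min (log u - u) (log v - v) ≤ log t - t := by
  have hconc : ConcaveOn ℝ (Ioi 0) (fun t => log t - t) :=
    strictConcaveOn_log_Ioi.concaveOn.sub (convexOn_id (convex_Ioi 0))
  exact hconc.ge_on_segment hu (hu.trans_le (ht.1.trans ht.2))
    (by rwa [segment_eq_Icc (ht.1.trans ht.2)])

theorem two_mul_add_two_mul_log_one_sub_le {a c : ℝ} (ha : 0 ≤ a) (ha1 : a < 1)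
    (hc : c ∈ Icc (-1) 1) :
    2 * a + 2 * log (1 - a) ≤ 2 * a * c + log (1 + a ^ 2 - 2 * a * c) := by
  obtain ⟨hc₁, hc₂⟩ := hc
  have ht : 1 + a ^ 2 - 2 * a * c ∈ Icc ((1 - a) ^ 2) ((1 + a) ^ 2) :=
    ⟨by nlinarith, by nlinarith⟩
  have hmin := log_sub_self_ge_min (by nlinarith) ht
  have hends : log ((1 - a) ^ 2) - (1 - a) ^ 2 ≤ log ((1 + a) ^ 2) - (1 + a) ^ 2 := by
    simp only [Real.log_pow, Nat.cast_ofNat]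
    linarith [two_mul_le_log_one_add_sub_log_one_sub ha ha1]
  rw [min_eq_left hends, Real.log_pow, Nat.cast_ofNat] at hmin
  linarith

theorem stmt_0 (a β : ℝ) (ha : 0 < a) (ha' : a ≤ 1 / Real.sqrt 3)
    (hβ : β ≥ -2 * Real.sqrt 3 - 6 * Real.log (1 - 1 / Real.sqrt 3)) :
    ∀ x ∈ Set.Icc (0 : ℝ) (2 * Real.pi),
      Real.exp (β * a ^ 2 + 2 * a * Real.cos x) ≥ 1 / (1 + a ^ 2 - 2 * a * Real.cos x) := by
  intro x _
  have hs : 1 / √3 < 1 := by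
    rw [div_lt_one (by positivity), lt_sqrt zero_le_one]; norm_num
  have hβ' : 2 * ((-log (1 - 1 / √3) - 1 / √3) / (1 / √3) ^ 2) ≤ β := by
    have hsq : (1 / √3) ^ 2 = 1 / 3 := by rw [div_pow, one_pow, sq_sqrt (by norm_num)]
    have hinv : 6 * (1 / √3) = 2 * √3 := by field_simp; norm_num
    rw [hsq]
    linarith
  have hc : cos x ∈ Icc (-1) 1 := ⟨neg_one_le_cos x, cos_le_one x⟩
  have hD : 0 < 1 + a ^ 2 - 2 * a * cos x := by nlinarith [hc.1, hc.2]
  rw [ge_iff_le, one_div, ← exp_log hD, ← exp_neg, exp_le_exp]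
  linarith [neg_two_mul_add_log_one_sub_le ha ha' hs hβ',
    two_mul_add_two_mul_log_one_sub_le ha.le (ha'.trans_lt hs) hc]
end

section
/- Let 0 < a ≤ 1/√3, l a natural number with l ≥ 1, and β ≥ -2√3 - 6·log(1 - 1/√3). Then ∫₀^{2π} (1 + a² - 2a·cos x)^{-l} dx ≤ ∫₀^{2π} exp(β·l·a² + 2·l·a·cos x) dx. -/
/-!
Pointwise, with `c = cos x`, it suffices that `(1 + a² - 2ac)⁻¹ ≤ exp (β a² + 2ac)`.
Since `1 + a² - 2ac ≥ (1 - ac)²`, this follows from `2 R(ac) ≤ β a²`, where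
`R t = -log (1 - t) - t = ∑ tⁿ⁺²/(n+2)`. The series gives `R(ac) ≤ R(a)` and shows that
`R(t)/t²` increases on `[0, 1)`, so `R(a)/a² ≤ R(1/√3)/(1/√3)² = 3 R(1/√3)`, and the hypothesis
on `β` says exactly `6 R(1/√3) ≤ β`.
-/

open Real

noncomputable def logRemainder (t : ℝ) : ℝ := -log (1 - t) - t

lemma hasSum_logRemainder {t : ℝ} (ht : |t| < 1) :
    HasSum (fun n : ℕ => t ^ (n + 2) / (n + 2)) (logRemainder t) := by
  have h := (hasSum_nat_add_iff' (f := fun n : ℕ => t ^ (n + 1) / (n + 1)) 1).2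
    (hasSum_pow_div_log_of_abs_lt_one ht)
  rw [show logRemainder t = -log (1 - t) - ∑ i ∈ Finset.range 1, t ^ (i + 1) / (i + 1) by
    simp [logRemainder]]
  convert h using 3 with n <;> first | rfl | (push_cast; ring)

lemma logRemainder_le_of_abs_le {t u : ℝ} (htu : |t| ≤ u) (hu : u < 1) :
    logRemainder t ≤ logRemainder u := by
  have hu' : |u| < 1 := by rwa [abs_of_nonneg ((abs_nonneg t).trans htu)]
  refine hasSum_le (fun n => ?_) (hasSum_logRemainder (htu.trans_lt hu)) (hasSum_logRemainder hu')
  refine div_le_div_of_nonneg_right ?_ (by positivity)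
  calc t ^ (n + 2) ≤ |t| ^ (n + 2) := by rw [← abs_pow]; exact le_abs_self _
    _ ≤ u ^ (n + 2) := by gcongr

lemma logRemainder_mul_sq_le {t u : ℝ} (ht : 0 ≤ t) (htu : t ≤ u) (hu : u < 1) :
    logRemainder t * u ^ 2 ≤ logRemainder u * t ^ 2 := by
  have ht' : |t| < 1 := by rw [abs_of_nonneg ht]; exact htu.trans_lt hu
  have hu' : |u| < 1 := by rw [abs_of_nonneg (ht.trans htu)]; exact hu
  refine hasSum_le (fun n => ?_) ((hasSum_logRemainder ht').mul_right _)
    ((hasSum_logRemainder hu').mul_right _)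
  rw [div_mul_eq_mul_div, div_mul_eq_mul_div]
  refine div_le_div_of_nonneg_right ?_ (by positivity)
  calc t ^ (n + 2) * u ^ 2 = t ^ n * (t ^ 2 * u ^ 2) := by ring
    _ ≤ u ^ n * (t ^ 2 * u ^ 2) := by gcongr
    _ = u ^ (n + 2) * t ^ 2 := by ring

lemma two_mul_logRemainder_le_of_le {a s β : ℝ} (ha : 0 ≤ a) (has : a ≤ s) (hs : s < 1)
    (hβ : 2 * logRemainder s ≤ β * s ^ 2) : 2 * logRemainder a ≤ β * a ^ 2 := by
  rcases ha.eq_or_lt with rfl | ha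
  · simp [logRemainder]
  have hs2 : 0 < s ^ 2 := pow_pos (ha.trans_le has) 2
  have := logRemainder_mul_sq_le ha.le has hs
  nlinarith

lemma sq_one_sub_mul_le {a c : ℝ} (hc : |c| ≤ 1) :
    (1 - a * c) ^ 2 ≤ 1 + a ^ 2 - 2 * a * c := by
  have : c ^ 2 ≤ 1 := (sq_le_one_iff_abs_le_one c).2 hc
  nlinarith [sq_nonneg a]

lemma inv_le_exp_of_logRemainder_le {a c β : ℝ} (ha : 0 ≤ a) (ha1 : a < 1) (hc : |c| ≤ 1)
    (hβ : 2 * logRemainder a ≤ β * a ^ 2) :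
    (1 + a ^ 2 - 2 * a * c)⁻¹ ≤ exp (β * a ^ 2 + 2 * a * c) := by
  have hac : |a * c| ≤ a := by
    rw [abs_mul, abs_of_nonneg ha]; exact mul_le_of_le_one_right ha hc
  have hpos : 0 < 1 - a * c := by linarith [le_abs_self (a * c)]
  have hR := logRemainder_le_of_abs_le hac ha1
  have hexp : exp (-(β * a ^ 2 + 2 * a * c)) ≤ (1 - a * c) ^ 2 := by
    rw [← exp_log (pow_pos hpos 2), log_pow, exp_le_exp]
    unfold logRemainder at hR hβ
    push_cast
    linarith
  calc (1 + a ^ 2 - 2 * a * c)⁻¹ ≤ (exp (-(β * a ^ 2 + 2 * a * c)))⁻¹ :=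
        inv_anti₀ (exp_pos _) (hexp.trans (sq_one_sub_mul_le hc))
    _ = exp (β * a ^ 2 + 2 * a * c) := by rw [exp_neg, inv_inv]

lemma two_mul_logRemainder_inv_sqrt_three_le {β : ℝ}
    (hβ : β ≥ -2 * √3 - 6 * log (1 - 1 / √3)) :
    2 * logRemainder (1 / √3) ≤ β * (1 / √3) ^ 2 := by
  have h3 : √3 ^ 2 = 3 := sq_sqrt (by norm_num)
  have hs : 0 < √3 := by positivity
  have : 1 / √3 = √3 / 3 := by field_simp; linarith
  rw [div_pow, h3, logRemainder, this]
  rw [this] at hβ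
  linarith

theorem stmt_1_general (a β : ℝ) (l : ℕ) (ha : 0 < a) (ha' : a ≤ 1 / Real.sqrt 3)
    (hβ : β ≥ -2 * Real.sqrt 3 - 6 * Real.log (1 - 1 / Real.sqrt 3)) :
    ∫ x in (0:ℝ)..(2 * Real.pi), (1 + a ^ 2 - 2 * a * Real.cos x)⁻¹ ^ l ≤
      ∫ x in (0:ℝ)..(2 * Real.pi), Real.exp (β * l * a ^ 2 + 2 * l * a * Real.cos x) := by
  have hs1 : 1 / √3 < 1 := by
    rw [div_lt_one (by positivity)]; exact lt_sqrt_of_sq_lt (by norm_num)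
  have ha1 : a < 1 := ha'.trans_lt hs1
  have hβa : 2 * logRemainder a ≤ β * a ^ 2 :=
    two_mul_logRemainder_le_of_le ha.le ha' hs1 (two_mul_logRemainder_inv_sqrt_three_le hβ)
  have hden : ∀ x, 0 < 1 + a ^ 2 - 2 * a * cos x := fun x =>
    have hac : a * cos x < 1 := (mul_le_of_le_one_right ha.le (cos_le_one x)).trans_lt ha1
    (pow_pos (sub_pos.2 hac) 2).trans_le (sq_one_sub_mul_le (abs_cos_le_one x))
  have hpointwise : ∀ x, (1 + a ^ 2 - 2 * a * cos x)⁻¹ ^ l ≤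
      exp (β * l * a ^ 2 + 2 * l * a * cos x) := fun x =>
    calc (1 + a ^ 2 - 2 * a * cos x)⁻¹ ^ l ≤ exp (β * a ^ 2 + 2 * a * cos x) ^ l := by
          gcongr
          · exact (inv_pos.2 (hden x)).le
          · exact inv_le_exp_of_logRemainder_le ha.le ha1 (abs_cos_le_one x) hβa
      _ = exp (β * l * a ^ 2 + 2 * l * a * cos x) := by rw [← exp_nat_mul]; ring_nf
  refine intervalIntegral.integral_mono_on (by positivity) ?_ ?_ fun x _ => hpointwise x
  · have hcont : Continuous fun x => (1 + a ^ 2 - 2 * a * cos x)⁻¹ :=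
      by fun_prop (disch := exact fun x => (hden x).ne')
    exact (hcont.pow l).intervalIntegrable _ _
  · exact (by fun_prop : Continuous _).intervalIntegrable _ _

theorem stmt_1 (a β : ℝ) (l : ℕ) (ha : 0 < a) (ha' : a ≤ 1 / Real.sqrt 3) (hl : 1 ≤ l)
    (hβ : β ≥ -2 * Real.sqrt 3 - 6 * Real.log (1 - 1 / Real.sqrt 3)) :
    ∫ x in (0:ℝ)..(2 * Real.pi), (1 + a ^ 2 - 2 * a * Real.cos x)⁻¹ ^ l ≤
      ∫ x in (0:ℝ)..(2 * Real.pi), Real.exp (β * l * a ^ 2 + 2 * l * a * Real.cos x) :=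
  stmt_1_general a β l ha ha' hβ
end

section
/- Let β = -2√3 - 6·log(1 - 1/√3) and define F(a) = 2a + β·a² + 2·log(1 - a) for a ∈ [0, 1/√3]. Then F(a) ≥ 0 for all a ∈ [0, 1/√3]. -/
open Real Set

theorem stmt_2 (β : ℝ) (hβ : β = -2 * Real.sqrt 3 - 6 * Real.log (1 - 1 / Real.sqrt 3))
    (F : ℝ → ℝ) (hF : ∀ a, F a = 2 * a + β * a ^ 2 + 2 * Real.log (1 - a)) :
    ∀ a ∈ Set.Icc (0 : ℝ) (1 / Real.sqrt 3), F a ≥ 0 := by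
  have hFfun : F = fun a => 2 * a + β * a ^ 2 + 2 * Real.log (1 - a) := funext hF
  subst hFfun
  set s := Real.sqrt 3 with hs
  have hs2 : s ^ 2 = 3 := Real.sq_sqrt (by norm_num)
  have hs0 : 0 < s := Real.sqrt_pos.mpr (by norm_num)
  have hs1 : 1 < s := by nlinarith
  set a₀ : ℝ := 1 / s with ha₀
  have ha₀0 : 0 < a₀ := by positivity
  have ha₀1 : a₀ < 1 := by
    rw [ha₀, div_lt_one hs0]; exact hs1
  -- β > 0
  have hLlt : Real.log (1 - a₀) < -a₀ := by
    have h1 : (1:ℝ) - a₀ < Real.exp (-a₀) := by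
      have := Real.add_one_lt_exp (x := -a₀) (by linarith)
      linarith
    calc Real.log (1 - a₀) < Real.log (Real.exp (-a₀)) :=
          Real.log_lt_log (by linarith) h1
      _ = -a₀ := Real.log_exp _
  have h6a : 6 * a₀ = 2 * s := by
    rw [ha₀]; field_simp; nlinarith
  have hβpos : 0 < β := by
    rw [hβ]
    linarith
  -- endpoint values
  have hF0 : (2 * (0:ℝ) + β * 0 ^ 2 + 2 * Real.log (1 - 0)) = 0 := by
    simp
  have hFa₀ : (2 * a₀ + β * a₀ ^ 2 + 2 * Real.log (1 - a₀)) = 0 := by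
    have ha₀sq : a₀ ^ 2 = 1 / 3 := by
      rw [ha₀]; field_simp; nlinarith
    have h2a : 2 * a₀ = 2 * s / 3 := by
      rw [ha₀]; field_simp; nlinarith
    rw [hβ, ha₀sq, h2a]
    ring
  -- derivative
  have hderiv : ∀ x : ℝ, x < 1 →
      HasDerivAt (fun a => 2 * a + β * a ^ 2 + 2 * Real.log (1 - a))
        (2 + β * (2 * x) + 2 * ((1 - x)⁻¹ * (-1))) x := by
    intro x hx
    have h1 : HasDerivAt (fun a : ℝ => 2 * a) 2 x := by
      simpa using (hasDerivAt_id x).const_mul 2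
    have h2 : HasDerivAt (fun a : ℝ => β * a ^ 2) (β * (2 * x)) x := by
      simpa using (hasDerivAt_pow 2 x).const_mul β
    have hin : HasDerivAt (fun a : ℝ => 1 - a) (-1) x := by
      simpa using (hasDerivAt_id x).const_sub 1
    have h3 : HasDerivAt (fun a : ℝ => Real.log (1 - a)) ((1 - x)⁻¹ * (-1)) x :=
      (Real.hasDerivAt_log (by linarith)).comp x hin
    exact (h1.add h2).add (h3.const_mul 2)
  have hderiv' : ∀ x : ℝ, x < 1 →
      deriv (fun a => 2 * a + β * a ^ 2 + 2 * Real.log (1 - a)) x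
        = 2 * x * (β * (1 - x) - 1) / (1 - x) := by
    intro x hx
    rw [(hderiv x hx).deriv]
    have hne : (1 : ℝ) - x ≠ 0 := by linarith
    field_simp
    ring
  intro a ha
  obtain ⟨ha0, ha1⟩ := ha
  have haa : a < 1 := lt_of_le_of_lt ha1 ha₀1
  by_cases hψ : 0 ≤ β * (1 - a) - 1
  · -- F monotone on [0, a], so F a ≥ F 0 = 0
    have hmono : MonotoneOn (fun a => 2 * a + β * a ^ 2 + 2 * Real.log (1 - a)) (Icc 0 a) := by
      apply monotoneOn_of_deriv_nonneg (convex_Icc 0 a)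
      · intro x hx
        exact (hderiv x (lt_of_le_of_lt hx.2 haa)).continuousAt.continuousWithinAt
      · intro x hx
        rw [interior_Icc] at hx
        exact (hderiv x (lt_trans hx.2 haa)).differentiableAt.differentiableWithinAt
      · intro x hx
        rw [interior_Icc] at hx
        rw [hderiv' x (lt_trans hx.2 haa)]
        apply div_nonneg _ (by linarith [hx.2, haa])
        have : 0 ≤ β * (1 - x) - 1 := by nlinarith [hx.1, hx.2]
        nlinarith [hx.1]
    have := hmono (Set.left_mem_Icc.mpr ha0) (Set.right_mem_Icc.mpr ha0) ha0
    simpa [hF0] using this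
  · -- F antitone on [a, a₀], so F a ≥ F a₀ = 0
    push_neg at hψ
    have hanti : AntitoneOn (fun a => 2 * a + β * a ^ 2 + 2 * Real.log (1 - a)) (Icc a a₀) := by
      apply antitoneOn_of_deriv_nonpos (convex_Icc a a₀)
      · intro x hx
        exact (hderiv x (lt_of_le_of_lt hx.2 ha₀1)).continuousAt.continuousWithinAt
      · intro x hx
        rw [interior_Icc] at hx
        exact (hderiv x (lt_trans hx.2 ha₀1)).differentiableAt.differentiableWithinAt
      · intro x hx
        rw [interior_Icc] at hx
        rw [hderiv' x (lt_trans hx.2 ha₀1)]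
        apply div_nonpos_of_nonpos_of_nonneg _ (by linarith [hx.2, ha₀1])
        have hx0 : 0 < x := lt_of_le_of_lt ha0 hx.1
        have : β * (1 - x) - 1 < 0 := by nlinarith [hx.1]
        nlinarith
    have := hanti (Set.left_mem_Icc.mpr ha1) (Set.right_mem_Icc.mpr ha1) ha1
    simp only at this
    rw [hFa₀] at this
    simpa using this
end

section
/- The function f(α) = 2.56/2^{2α} + log(1 - 2^{-α}) is monotonically decreasing on the interval [1/2, 3/4], and f(3/4) > 0. -/
open Real Set

-- bounds on 2^(3/4)
lemma spow4 : ((2:ℝ) ^ ((3:ℝ)/4)) ^ (4:ℕ) = 8 := by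
  rw [← Real.rpow_natCast ((2:ℝ) ^ ((3:ℝ)/4)) 4, ← Real.rpow_mul (by norm_num)]
  norm_num

lemma s_pos : (0:ℝ) < (2:ℝ) ^ ((3:ℝ)/4) := Real.rpow_pos_of_pos two_pos _

lemma s_lb : (1.6817:ℝ) < (2:ℝ) ^ ((3:ℝ)/4) := by
  apply lt_of_pow_lt_pow_left₀ 4 s_pos.le
  rw [spow4]; norm_num

lemma s_ub : (2:ℝ) ^ ((3:ℝ)/4) < 1.6818 := by
  apply lt_of_pow_lt_pow_left₀ 4 (by norm_num)
  rw [spow4]; norm_num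

lemma rpow2 : ((2:ℝ) ^ ((1:ℝ)/2)) ^ (2:ℕ) = 2 := by
  rw [← Real.rpow_natCast ((2:ℝ) ^ ((1:ℝ)/2)) 2, ← Real.rpow_mul (by norm_num)]
  norm_num

lemma r_lb : (1.4142:ℝ) < (2:ℝ) ^ ((1:ℝ)/2) := by
  apply lt_of_pow_lt_pow_left₀ 2 (Real.rpow_pos_of_pos two_pos _).le
  rw [rpow2]; norm_num

lemma hasDeriv (x : ℝ) (ht : 1 - (2:ℝ)^(-x) ≠ 0) :
    HasDerivAt (fun y : ℝ => 2.56 / (2:ℝ) ^ (2*y) + Real.log (1 - (2:ℝ) ^ (-y)))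
    ((0 * (2:ℝ)^(2*x) - 2.56 * ((2:ℝ)^(2*x) * Real.log 2 * (2*1))) / ((2:ℝ)^(2*x))^2
     + -((2:ℝ)^(-x) * Real.log 2 * (-1)) / (1 - (2:ℝ)^(-x))) x := by
  have hg : HasDerivAt (fun y : ℝ => (2:ℝ) ^ (2*y)) ((2:ℝ)^(2*x) * Real.log 2 * (2*1)) x :=
    (Real.hasStrictDerivAt_const_rpow two_pos (2*x)).hasDerivAt.comp x
      ((hasDerivAt_id x).const_mul 2)
  have hgne : (2:ℝ)^(2*x) ≠ 0 := ne_of_gt (Real.rpow_pos_of_pos two_pos _)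
  have ht' : HasDerivAt (fun y : ℝ => (2:ℝ) ^ (-y)) ((2:ℝ)^(-x) * Real.log 2 * (-1)) x :=
    (Real.hasStrictDerivAt_const_rpow two_pos (-x)).hasDerivAt.comp x (hasDerivAt_neg x)
  have hinner : HasDerivAt (fun y : ℝ => 1 - (2:ℝ)^(-y)) (-((2:ℝ)^(-x) * Real.log 2 * (-1))) x :=
    ht'.const_sub 1
  exact ((hasDerivAt_const x 2.56).div hg hgne).add (hinner.log ht)

lemma t_bounds {x : ℝ} (hx : x ∈ Set.Ioo (1/2:ℝ) (3/4)) :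
    (0.59:ℝ) < (2:ℝ)^(-x) ∧ (2:ℝ)^(-x) < 0.708 := by
  obtain ⟨h1, h2⟩ := hx
  have hlt : (2:ℝ)^(-x) < (2:ℝ)^(-(1/2):ℝ) :=
    (Real.rpow_lt_rpow_left_iff one_lt_two).mpr (by linarith)
  have hgt : (2:ℝ)^(-(3/4):ℝ) < (2:ℝ)^(-x) :=
    (Real.rpow_lt_rpow_left_iff one_lt_two).mpr (by linarith)
  have e1 : (2:ℝ)^(-(1/2):ℝ) = ((2:ℝ)^((1:ℝ)/2))⁻¹ := by
    rw [← Real.rpow_neg (by norm_num)]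
  have e2 : (2:ℝ)^(-(3/4):ℝ) = ((2:ℝ)^((3:ℝ)/4))⁻¹ := by
    rw [← Real.rpow_neg (by norm_num)]
  have hr := r_lb
  have hrpos : (0:ℝ) < (2:ℝ)^((1:ℝ)/2) := Real.rpow_pos_of_pos two_pos _
  have hri : ((2:ℝ)^((1:ℝ)/2))⁻¹ * (2:ℝ)^((1:ℝ)/2) = 1 := inv_mul_cancel₀ (ne_of_gt hrpos)
  have hrinv : ((2:ℝ)^((1:ℝ)/2))⁻¹ < 0.708 := by
    have h0 : (0:ℝ) < ((2:ℝ)^((1:ℝ)/2))⁻¹ := by positivity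
    nlinarith
  have hs := s_ub
  have hsi : ((2:ℝ)^((3:ℝ)/4))⁻¹ * (2:ℝ)^((3:ℝ)/4) = 1 := inv_mul_cancel₀ (ne_of_gt s_pos)
  have hsinv : (0.59:ℝ) < ((2:ℝ)^((3:ℝ)/4))⁻¹ := by
    have h0 : (0:ℝ) < ((2:ℝ)^((3:ℝ)/4))⁻¹ := by positivity
    nlinarith
  constructor
  · calc (0.59:ℝ) < ((2:ℝ)^((3:ℝ)/4))⁻¹ := hsinv
      _ = (2:ℝ)^(-(3/4):ℝ) := e2.symm
      _ < (2:ℝ)^(-x) := hgt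
  · calc (2:ℝ)^(-x) < (2:ℝ)^(-(1/2):ℝ) := hlt
      _ = ((2:ℝ)^((1:ℝ)/2))⁻¹ := e1
      _ < 0.708 := hrinv

lemma myDerivNeg {x : ℝ} (hx : x ∈ Set.Ioo (1/2:ℝ) (3/4)) :
    (0 * (2:ℝ)^(2*x) - 2.56 * ((2:ℝ)^(2*x) * Real.log 2 * (2*1))) / ((2:ℝ)^(2*x))^2
     + -((2:ℝ)^(-x) * Real.log 2 * (-1)) / (1 - (2:ℝ)^(-x)) < 0 := by
  obtain ⟨ht1, ht2⟩ := t_bounds hx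
  set t := (2:ℝ)^(-x) with htdef
  set s2 := (2:ℝ)^(2*x) with hsdef
  have hts : s2 * (t * t) = 1 := by
    rw [htdef, hsdef, ← Real.rpow_add two_pos, ← Real.rpow_add two_pos,
      show 2*x + (-x + -x) = (0:ℝ) by ring, Real.rpow_zero]
  have hs2pos : 0 < s2 := Real.rpow_pos_of_pos two_pos _
  have htpos : (0:ℝ) < t := by linarith
  have h1t : (0:ℝ) < 1 - t := by linarith
  have hL : 0 < Real.log 2 := Real.log_pos one_lt_two
  have hE : (0 * s2 - 2.56 * (s2 * Real.log 2 * (2*1))) / s2^2 + -(t * Real.log 2 * (-1)) / (1-t)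
      = Real.log 2 * (t/(1-t) - 5.12 * t^2) := by
    have hs2 : s2 = (t*t)⁻¹ := by
      field_simp
      nlinarith [hts]
    rw [hs2]
    field_simp
    ring
  rw [hE]
  apply mul_neg_of_pos_of_neg hL
  have key : t < 5.12 * t^2 * (1-t) := by nlinarith [mul_nonneg (sub_nonneg.2 ht1.le) (sub_nonneg.2 ht2.le)]
  have : t/(1-t) < 5.12 * t^2 := by
    rw [div_lt_iff₀ h1t]
    linarith
  linarith

lemma val_pos : (0:ℝ) < 2.56 / (2:ℝ) ^ (2 * (3/4:ℝ)) + Real.log (1 - (2:ℝ) ^ (-(3/4:ℝ))) := by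
  set s := (2:ℝ)^((3:ℝ)/4) with hs
  have hspos := s_pos
  have hslb := s_lb
  have hsub := s_ub
  have e1 : (2:ℝ)^(2*(3/4:ℝ)) = s^2 := by
    rw [hs, ← Real.rpow_natCast ((2:ℝ) ^ ((3:ℝ)/4)) 2, ← Real.rpow_mul (by norm_num)]
    norm_num
  have e2 : (2:ℝ)^(-(3/4:ℝ)) = s⁻¹ := by
    rw [hs, ← Real.rpow_neg (by norm_num)]
  rw [e1, e2]
  -- s⁻¹ < 0.5947
  have hsi : s⁻¹ * s = 1 := inv_mul_cancel₀ (ne_of_gt hspos)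
  have hsipos : (0:ℝ) < s⁻¹ := by positivity
  have hinv : s⁻¹ < 0.59464 := by nlinarith
  have h1s : (0:ℝ) < 1 - s⁻¹ := by linarith
  -- w := 2.56/s^2 ≥ v0
  have hs2 : s^2 < 1.6818^2 := by nlinarith
  have hw : (2.56:ℝ)/1.6818^2 ≤ 2.56/s^2 := by
    apply div_le_div_of_nonneg_left (by norm_num) (by positivity) (by nlinarith)
  -- Taylor bound: exp(2.56/1.6818^2) ≥ sum ≥ 2.4712
  have hv0 : (0:ℝ) ≤ 2.56/1.6818^2 := by norm_num
  have hsum := Real.sum_le_exp_of_nonneg hv0 6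
  have hsumval : (2.4712:ℝ) ≤ ∑ i ∈ Finset.range 6, ((2.56:ℝ)/1.6818^2) ^ i / i.factorial := by
    simp only [Finset.sum_range_succ, Finset.sum_range_zero, Nat.factorial]
    norm_num
  have hexp : (2.4712:ℝ) ≤ Real.exp (2.56/s^2) := by
    calc (2.4712:ℝ) ≤ ∑ i ∈ Finset.range 6, ((2.56:ℝ)/1.6818^2) ^ i / i.factorial := hsumval
      _ ≤ Real.exp (2.56/1.6818^2) := hsum
      _ ≤ Real.exp (2.56/s^2) := Real.exp_le_exp.mpr hw
  -- conclude
  have hlog : -(2.56/s^2) < Real.log (1 - s⁻¹) := by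
    rw [Real.lt_log_iff_exp_lt h1s, Real.exp_neg]
    have hE : (0:ℝ) < Real.exp (2.56/s^2) := Real.exp_pos _
    have hEi : (Real.exp (2.56/s^2))⁻¹ * Real.exp (2.56/s^2) = 1 := inv_mul_cancel₀ (ne_of_gt hE)
    have hEipos : (0:ℝ) < (Real.exp (2.56/s^2))⁻¹ := by positivity
    have : (Real.exp (2.56/s^2))⁻¹ < 0.4047 := by nlinarith
    linarith
  linarith

theorem stmt_5 (f : ℝ → ℝ) (hf : ∀ α, f α = 2.56 / (2:ℝ) ^ (2 * α) + Real.log (1 - (2:ℝ) ^ (-α))) :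
    AntitoneOn f (Set.Icc (1/2 : ℝ) (3/4)) ∧ f (3/4) > 0 := by
  have hF : f = fun α : ℝ => 2.56 / (2:ℝ) ^ (2 * α) + Real.log (1 - (2:ℝ) ^ (-α)) := funext hf
  rw [hF]
  constructor
  · have hne : ∀ x ∈ Set.Icc (1/2:ℝ) (3/4), 1 - (2:ℝ)^(-x) ≠ 0 := by
      intro x hx
      have : (2:ℝ)^(-x) < 1 :=
        Real.rpow_lt_one_of_one_lt_of_neg one_lt_two (by linarith [hx.1])
      linarith
    apply (strictAntiOn_of_deriv_neg (convex_Icc _ _) ?_ ?_).antitoneOn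
    · exact fun x hx =>
        (hasDeriv x (hne x hx)).differentiableAt.continuousAt.continuousWithinAt
    · rw [interior_Icc]
      intro x hx
      have hxI : x ∈ Set.Icc (1/2:ℝ) (3/4) := ⟨hx.1.le, hx.2.le⟩
      rw [(hasDeriv x (hne x hxI)).deriv]
      exact myDerivNeg hx
  · exact val_pos
end

section
/- Let p ≥ 3 be a prime, σ ∈ (1/2, 3/4), l ≥ 1 a natural number, and β = -2√3 - 6·log(1 - 1/√3). Then (1/2π)∫₀^{2π} (p^{2σ}/(p^{2σ} + 1 - 2p^σ·cos θ))^l dθ ≤ exp((l² + βl)/p^{2σ}). -/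
/-!
Put `r = p ^ (-σ) ≤ 1 / √3`, so that the integrand is `(1 + r² - 2 r cos θ)⁻ˡ`. As
`c ↦ log (1 + r² - 2 r c)` is concave, the pointwise bound
`(1 + r² - 2 r c)⁻¹ ≤ exp (2 r c + β r²)` on `[-1, 1]` reduces to the endpoint inequalities
`log (1 ± r) ≥ ± r - β r² / 2`. The one for `1 + r` holds since `β ≥ 1`; the one for
`1 - r` holds on `[0, 1 / √3]` because `(-log (1 - r) - r) / r²` is nondecreasing and equals
`β / 2` at `1 / √3`. Raising to the `l`-th power and averaging over `θ` leaves `exp (β l r²)`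
times the mean of `exp (2 l r cos θ)`, which is `I₀ (2 l r) ≤ exp ((l r)²)`: the series
`∑ (t / 2) ^ (2k) / (k!)²` of `I₀ t` is dominated termwise by that of `exp (t² / 4)`.
-/

open Real intervalIntegral
open scoped Nat

lemma sub_sq_div_two_le_log_one_add {r : ℝ} (hr : 0 ≤ r) : r - r ^ 2 / 2 ≤ log (1 + r) := by
  refine le_trans ?_ (le_log_one_add_of_nonneg hr)
  rw [le_div_iff₀ (by linarith)]
  nlinarith [pow_nonneg hr 3]

lemma hasSum_neg_log_one_sub_sub {x : ℝ} (hx : |x| < 1) :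
    HasSum (fun n : ℕ => x ^ (n + 2) / (n + 2)) (-log (1 - x) - x) := by
  have h := (hasSum_nat_add_iff' 1).mpr (hasSum_pow_div_log_of_abs_lt_one hx)
  simpa [add_assoc, one_add_one_eq_two] using h

lemma one_half_le_neg_log_one_sub_sub_div_sq {s : ℝ} (hs0 : 0 < s) (hs1 : s < 1) :
    1 / 2 ≤ (-log (1 - s) - s) / s ^ 2 := by
  have h := le_hasSum (hasSum_neg_log_one_sub_sub (abs_lt.2 ⟨by linarith, hs1⟩)) 0
    (fun n _ => by positivity)
  simp only [CharP.cast_eq_zero, zero_add] at h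
  rw [le_div_iff₀ (by positivity)]
  linarith

/-- `(-log (1 - r) - r) / r ^ 2` has nonnegative Taylor coefficients, so it is nondecreasing. -/
lemma neg_log_one_sub_sub_le_div_sq_mul_sq {r s : ℝ} (hr : 0 ≤ r) (hrs : r ≤ s) (hs0 : 0 < s)
    (hs1 : s < 1) : -log (1 - r) - r ≤ (-log (1 - s) - s) / s ^ 2 * r ^ 2 := by
  rw [div_mul_eq_mul_div, le_div_iff₀ (by positivity)]
  refine hasSum_le (fun n => ?_)
    ((hasSum_neg_log_one_sub_sub (abs_lt.2 ⟨by linarith, by linarith⟩)).mul_right (s ^ 2))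
    ((hasSum_neg_log_one_sub_sub (abs_lt.2 ⟨by linarith, hs1⟩)).mul_right (r ^ 2))
  have hn : r ^ n ≤ s ^ n := pow_le_pow_left₀ hr hrs n
  rw [div_mul_eq_mul_div, div_mul_eq_mul_div]
  gcongr ?_ / _
  calc r ^ (n + 2) * s ^ 2 = r ^ n * (r ^ 2 * s ^ 2) := by ring
    _ ≤ s ^ n * (r ^ 2 * s ^ 2) := by gcongr
    _ = s ^ (n + 2) * r ^ 2 := by ring

/-- Since `log (1 + r ^ 2 - 2 * r * c)` is concave in `c`, it suffices to bound it from below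
at `c = ±1`. -/
lemma inv_one_add_sq_sub_two_mul_le_exp {r c K : ℝ} (hr0 : 0 ≤ r) (hr1 : r < 1)
    (hc : c ∈ Set.Icc (-1) 1) (hplus : r - K * r ^ 2 / 2 ≤ log (1 + r))
    (hminus : -r - K * r ^ 2 / 2 ≤ log (1 - r)) :
    (1 + r ^ 2 - 2 * r * c)⁻¹ ≤ exp (2 * r * c + K * r ^ 2) := by
  obtain ⟨hc1, hc2⟩ := hc
  have hX : 0 < 1 + r ^ 2 - 2 * r * c := by nlinarith
  have ha : 0 ≤ (1 - c) / 2 := by linarith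
  have hb : 0 ≤ (1 + c) / 2 := by linarith
  have hconc := strictConcaveOn_log_Ioi.concaveOn.2
    (Set.mem_Ioi.2 (by positivity : (0:ℝ) < (1 + r) ^ 2))
    (Set.mem_Ioi.2 (by nlinarith : (0:ℝ) < (1 - r) ^ 2)) ha hb (by ring)
  simp only [smul_eq_mul, log_pow, Nat.cast_ofNat] at hconc
  rw [inv_le_comm₀ hX (exp_pos _), ← exp_neg, ← le_log_iff_exp_le hX]
  calc -(2 * r * c + K * r ^ 2)
      = (1 - c) / 2 * (2 * (r - K * r ^ 2 / 2)) + (1 + c) / 2 * (2 * (-r - K * r ^ 2 / 2)) :=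
        by ring
    _ ≤ (1 - c) / 2 * (2 * log (1 + r)) + (1 + c) / 2 * (2 * log (1 - r)) := by
        gcongr
    _ ≤ log ((1 - c) / 2 * (1 + r) ^ 2 + (1 + c) / 2 * (1 - r) ^ 2) := hconc
    _ = log (1 + r ^ 2 - 2 * r * c) := by ring_nf

lemma integral_comp_neg_cos (f : ℝ → ℝ) :
    ∫ θ in 0..2 * π, f (-cos θ) = ∫ θ in 0..2 * π, f (cos θ) := by
  have hper : Function.Periodic (fun θ => f (cos θ)) (2 * π) := fun θ => by
    simp [cos_add_two_pi]
  calc ∫ θ in 0..2 * π, f (-cos θ) = ∫ θ in 0..2 * π, f (cos (θ + π)) := by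
        simp [cos_add_pi]
    _ = ∫ θ in π..π + 2 * π, f (cos θ) := by
        rw [integral_comp_add_right (fun x => f (cos x)), zero_add, add_comm]
    _ = ∫ θ in 0..0 + 2 * π, f (cos θ) := hper.intervalIntegral_add_eq π 0
    _ = ∫ θ in 0..2 * π, f (cos θ) := by rw [zero_add]

lemma integral_exp_mul_cos_eq_integral_cosh (a : ℝ) :
    ∫ θ in 0..2 * π, exp (a * cos θ) = ∫ θ in 0..2 * π, cosh (a * cos θ) := by
  have hsym : ∫ θ in 0..2 * π, exp (-(a * cos θ)) = ∫ θ in 0..2 * π, exp (a * cos θ) := by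
    simpa only [mul_neg] using integral_comp_neg_cos (fun x => exp (a * x))
  simp only [cosh_eq]
  rw [integral_div, integral_add ((by fun_prop : Continuous _).intervalIntegrable _ _)
    ((by fun_prop : Continuous _).intervalIntegrable _ _), hsym]
  ring

lemma integral_cos_pow_two_mul (k : ℕ) :
    ∫ θ in 0..2 * π, cos θ ^ (2 * k) = 2 * π * ((2 * k)! / (4 ^ k * (k ! : ℝ) ^ 2)) := by
  induction k with
  | zero => simp
  | succ k ih =>
    rw [show 2 * (k + 1) = 2 * k + 2 by ring, integral_cos_pow, sin_two_pi, sin_zero, ih,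
      Nat.factorial_succ, show 2 * k + 2 = (2 * k + 1) + 1 by ring, Nat.factorial_succ,
      Nat.factorial_succ]
    push_cast
    field_simp
    ring

/-- The series of `2π I₀(a)`, with `I₀` the modified Bessel function. -/
lemma hasSum_integral_cosh_mul_cos (a : ℝ) :
    HasSum (fun k : ℕ => 2 * π * ((a ^ 2 / 4) ^ k / (k ! : ℝ) ^ 2))
      (∫ θ in 0..2 * π, cosh (a * cos θ)) := by
  let F : ℕ → ℝ → ℝ := fun k θ => (a * cos θ) ^ (2 * k) / (2 * k)!
  have hF : ∀ k, ∫ θ in 0..2 * π, F k θ = 2 * π * ((a ^ 2 / 4) ^ k / (k ! : ℝ) ^ 2) := by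
    intro k
    calc ∫ θ in 0..2 * π, F k θ
        = a ^ (2 * k) / (2 * k)! * ∫ θ in 0..2 * π, cos θ ^ (2 * k) := by
          rw [← integral_const_mul]; congr 1 with θ; ring
      _ = 2 * π * ((a ^ 2 / 4) ^ k / (k ! : ℝ) ^ 2) := by
          rw [integral_cos_pow_two_mul, pow_mul, div_pow]; field_simp
  refine funext hF ▸ hasSum_integral_of_dominated_convergence F
    (fun k => (by fun_prop : Continuous (F k)).aestronglyMeasurable) (fun k => ?_)
    (.of_forall fun θ _ => (hasSum_cosh _).summable) ?_
    (.of_forall fun θ _ => hasSum_cosh _)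
  · exact .of_forall fun θ _ => (Real.norm_of_nonneg
      (div_nonneg ((even_two_mul k).pow_nonneg _) (Nat.cast_nonneg _))).le
  · simp only [F, ← cosh_eq_tsum]
    exact (by fun_prop : Continuous _).intervalIntegrable _ _

lemma integral_exp_mul_cos_le (a : ℝ) :
    ∫ θ in 0..2 * π, exp (a * cos θ) ≤ 2 * π * exp (a ^ 2 / 4) := by
  rw [integral_exp_mul_cos_eq_integral_cosh, exp_eq_exp_ℝ]
  refine hasSum_le (fun k => ?_) (hasSum_integral_cosh_mul_cos a)
    ((NormedSpace.expSeries_div_hasSum_exp (a ^ 2 / 4)).mul_left (2 * π))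
  have hk : (1 : ℝ) ≤ k ! := by exact_mod_cast k.factorial_pos
  gcongr
  nlinarith

lemma average_integral_inv_pow_le {r K : ℝ} (hr0 : 0 ≤ r) (hr1 : r < 1) (hK : 1 ≤ K)
    (hminus : -r - K * r ^ 2 / 2 ≤ log (1 - r)) (l : ℕ) :
    1 / (2 * π) * ∫ θ in 0..2 * π, (1 + r ^ 2 - 2 * r * cos θ)⁻¹ ^ l ≤
      exp ((l ^ 2 + K * l) * r ^ 2) := by
  have hplus : r - K * r ^ 2 / 2 ≤ log (1 + r) := by
    have hlog := sub_sq_div_two_le_log_one_add hr0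
    have hsq : r ^ 2 ≤ K * r ^ 2 := le_mul_of_one_le_left (sq_nonneg r) hK
    linarith
  have hX : ∀ θ, 0 < 1 + r ^ 2 - 2 * r * cos θ := fun θ => by
    nlinarith [cos_le_one θ, neg_one_le_cos θ]
  have hpt : ∀ θ, (1 + r ^ 2 - 2 * r * cos θ)⁻¹ ^ l ≤
      exp (K * l * r ^ 2) * exp (2 * l * r * cos θ) := fun θ =>
    calc (1 + r ^ 2 - 2 * r * cos θ)⁻¹ ^ l ≤ exp (2 * r * cos θ + K * r ^ 2) ^ l := by
          gcongr
          · exact (inv_pos.2 (hX θ)).le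
          · exact inv_one_add_sq_sub_two_mul_le_exp hr0 hr1 ⟨neg_one_le_cos θ, cos_le_one θ⟩
              hplus hminus
      _ = exp (K * l * r ^ 2) * exp (2 * l * r * cos θ) := by
          rw [← exp_nat_mul, ← exp_add]; ring_nf
  have hint : ∫ θ in 0..2 * π, (1 + r ^ 2 - 2 * r * cos θ)⁻¹ ^ l ≤
      2 * π * exp ((l ^ 2 + K * l) * r ^ 2) :=
    calc ∫ θ in 0..2 * π, (1 + r ^ 2 - 2 * r * cos θ)⁻¹ ^ l
        ≤ ∫ θ in 0..2 * π, exp (K * l * r ^ 2) * exp (2 * l * r * cos θ) :=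
          integral_mono (by positivity)
            (((by fun_prop : Continuous fun θ => 1 + r ^ 2 - 2 * r * cos θ).inv₀
              fun θ => (hX θ).ne').pow l |>.intervalIntegrable _ _)
            ((by fun_prop : Continuous _).intervalIntegrable _ _) hpt
      _ = exp (K * l * r ^ 2) * ∫ θ in 0..2 * π, exp (2 * l * r * cos θ) :=
          integral_const_mul _ _
      _ ≤ exp (K * l * r ^ 2) * (2 * π * exp ((2 * l * r) ^ 2 / 4)) := by
          gcongr; exact integral_exp_mul_cos_le _
      _ = 2 * π * exp ((l ^ 2 + K * l) * r ^ 2) := by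
          rw [mul_left_comm, ← exp_add]; ring_nf
  rw [div_mul_eq_mul_div, one_mul, div_le_iff₀ (by positivity)]
  linarith

lemma rpow_neg_le_one_div_sqrt_three {x σ : ℝ} (hx : 3 ≤ x) (hσ : 1 / 2 ≤ σ) :
    x ^ (-σ) ≤ 1 / √3 :=
  calc x ^ (-σ) ≤ (3 : ℝ) ^ (-σ) := rpow_le_rpow_of_nonpos (by norm_num) hx (by linarith)
    _ ≤ (3 : ℝ) ^ (-(1 / 2) : ℝ) := rpow_le_rpow_of_exponent_le (by norm_num) (by linarith)
    _ = 1 / √3 := by rw [rpow_neg zero_le_three, ← sqrt_eq_rpow, one_div]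

theorem stmt_12_general (p : ℕ) (hp3 : 3 ≤ p) (σ : ℝ)
    (hσ : σ ∈ Set.Ioo (1/2 : ℝ) (3/4)) (l : ℕ) (β : ℝ)
    (hβ : β = -2 * Real.sqrt 3 - 6 * Real.log (1 - 1 / Real.sqrt 3)) :
    (1 / (2 * Real.pi)) * ∫ θ in (0:ℝ)..(2 * Real.pi),
        ((p : ℝ) ^ (2 * σ) / ((p : ℝ) ^ (2 * σ) + 1 - 2 * (p : ℝ) ^ σ * Real.cos θ)) ^ l ≤
      Real.exp (((l : ℝ) ^ 2 + β * l) / (p : ℝ) ^ (2 * σ)) := by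
  set s : ℝ := 1 / √3 with hs
  have hs0 : 0 < s := by positivity
  have hs1 : s < 1 := by
    rw [hs, div_lt_one (by positivity), lt_sqrt zero_le_one]; norm_num
  have hβs : β = 2 * ((-log (1 - s) - s) / s ^ 2) := by
    have h3 : √3 ^ 2 = 3 := sq_sqrt zero_le_three
    rw [hβ, hs]; field_simp; ring_nf; rw [h3]; ring
  have hp : (0 : ℝ) < p := by positivity
  set r : ℝ := (p : ℝ) ^ (-σ) with hr
  have hr0 : 0 < r := by positivity
  have hrs : r ≤ s := rpow_neg_le_one_div_sqrt_three (by exact_mod_cast hp3) hσ.1.le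
  have hpσ : (p : ℝ) ^ σ = r⁻¹ := by rw [hr, rpow_neg hp.le, inv_inv]
  have hp2σ : (p : ℝ) ^ (2 * σ) = (r ^ 2)⁻¹ := by
    rw [mul_comm, rpow_mul hp.le, hpσ, rpow_two, inv_pow]
  have hK : 1 ≤ β := by linarith [one_half_le_neg_log_one_sub_sub_div_sq hs0 hs1]
  have hminus : -r - β * r ^ 2 / 2 ≤ log (1 - r) := by
    rw [hβs]; linarith [neg_log_one_sub_sub_le_div_sq_mul_sq hr0.le hrs hs0 hs1]
  convert average_integral_inv_pow_le hr0.le (hrs.trans_lt hs1) hK hminus l using 3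
  · congr 1 with θ
    rw [hp2σ, hpσ]; field_simp
  · rw [hp2σ, div_inv_eq_mul]

theorem stmt_12 (p : ℕ) (hp : p.Prime) (hp3 : 3 ≤ p) (σ : ℝ)
    (hσ : σ ∈ Set.Ioo (1/2 : ℝ) (3/4)) (l : ℕ) (hl : 1 ≤ l) (β : ℝ)
    (hβ : β = -2 * Real.sqrt 3 - 6 * Real.log (1 - 1 / Real.sqrt 3)) :
    (1 / (2 * Real.pi)) * ∫ θ in (0:ℝ)..(2 * Real.pi),
        ((p : ℝ) ^ (2 * σ) / ((p : ℝ) ^ (2 * σ) + 1 - 2 * (p : ℝ) ^ σ * Real.cos θ)) ^ l ≤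
      Real.exp (((l : ℝ) ^ 2 + β * l) / (p : ℝ) ^ (2 * σ)) :=
  stmt_12_general p hp3 σ hσ l β hβ
end

section
/- Let f : ℕ → ℝ≥0 have finite support, let K ≥ (log ‖f‖₁)⁴ with log ‖f‖₁ ≥ 4, and suppose ∑_{ab=cd} f(a)f(b)f(c)f(d) ≤ K·‖f‖₂⁴. With the choices l+1 = (log K)^{1/2}·(log log ‖f‖₁)^{-1/2} and V = exp((β/2 + (5/4)(l+1))·log log ‖f‖₁), where β ≈ 1.7032, we have V² + V^{-2l}·K^{1/2}·exp((2(l+1)² + β(l+1))·log log ‖f‖₁) ≤ 2·(log ‖f‖₁)^β·exp((5/2)(log K)^{1/2}(log log ‖f‖₁)^{1/2}). -/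
/-!
With `λ = log log ‖f‖₁` and `t = l + 1`, the choice of `l` makes `t² λ = log K`, and the choice
of `V` then makes both terms equal to `exp ((β + 5/2 t) λ) = (log ‖f‖₁)^β exp (5/2 √(log K) √λ)`.
-/

open Real

lemma sqrt_eq_exp_log_div_two {K : ℝ} (hK : 0 < K) : √K = exp (log K / 2) := by
  rw [sqrt_eq_rpow, rpow_def_of_pos hK, mul_one_div]

lemma sq_mul_eq_of_eq_sqrt_div_sqrt {a b t : ℝ} (ha : 0 ≤ a) (hb : 0 < b) (ht : t = √a / √b) :
    t ^ 2 * b = a := by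
  rw [ht, div_pow, sq_sqrt ha, sq_sqrt hb.le]
  field_simp

lemma sqrt_mul_sqrt_eq_of_eq_sqrt_div_sqrt {a b t : ℝ} (hb : 0 < b) (ht : t = √a / √b) :
    √a * √b = t * b := by
  rw [ht, div_mul_eq_mul_div, eq_div_iff (sqrt_pos.2 hb).ne', mul_assoc, mul_self_sqrt hb.le]

section Balance

variable {β l lam K V : ℝ}

lemma sq_eq_exp_of_eq_exp (hV : V = exp ((β / 2 + 5 / 4 * (l + 1)) * lam)) :
    V ^ 2 = exp ((β + 5 / 2 * (l + 1)) * lam) := by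
  rw [hV, ← exp_nat_mul]
  push_cast
  ring_nf

lemma rpow_neg_mul_sqrt_mul_exp_eq_exp (hK : 0 < K) (ht : (l + 1) ^ 2 * lam = log K)
    (hV : V = exp ((β / 2 + 5 / 4 * (l + 1)) * lam)) :
    V ^ (-(2 * l)) * √K * exp ((2 * (l + 1) ^ 2 + β * (l + 1)) * lam) =
      exp ((β + 5 / 2 * (l + 1)) * lam) := by
  rw [hV, ← exp_mul, sqrt_eq_exp_log_div_two hK, ← exp_add, ← exp_add, ← ht]
  ring_nf

end Balance

theorem stmt_17_general
    (β L1 K l V : ℝ)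
    (hL1' : 4 ≤ Real.log L1)
    (hK : (Real.log L1) ^ 4 ≤ K)
    (hl : l + 1 = Real.sqrt (Real.log K) / Real.sqrt (Real.log (Real.log L1)))
    (hV : V = Real.exp ((β / 2 + 5 / 4 * (l + 1)) * Real.log (Real.log L1))) :
    V ^ 2 + V ^ (-(2 * l)) * Real.sqrt K *
        Real.exp ((2 * (l + 1) ^ 2 + β * (l + 1)) * Real.log (Real.log L1)) ≤
      2 * (Real.log L1) ^ β *
        Real.exp (5 / 2 * Real.sqrt (Real.log K) * Real.sqrt (Real.log (Real.log L1))) := by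
  set lam := log (log L1)
  have hlam : 0 < lam := log_pos (by linarith)
  have hK1 : 1 ≤ K := le_trans (one_le_pow₀ (by linarith)) hK
  have ht : (l + 1) ^ 2 * lam = log K :=
    sq_mul_eq_of_eq_sqrt_div_sqrt (log_nonneg hK1) hlam hl
  rw [sq_eq_exp_of_eq_exp hV, rpow_neg_mul_sqrt_mul_exp_eq_exp (by linarith) ht hV,
    rpow_def_of_pos (by linarith), mul_assoc, ← exp_add, mul_assoc (5 / 2 : ℝ),
    sqrt_mul_sqrt_eq_of_eq_sqrt_div_sqrt hlam hl, ← two_mul]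
  exact (congrArg (fun x => 2 * exp x) (by ring)).le

theorem stmt_17 (f : ℕ → ℝ) (hf : ∀ n, 0 ≤ f n) (hsupp : (Function.support f).Finite)
    (β L1 K l V : ℝ)
    (hβ : β = -2 * Real.sqrt 3 - 6 * Real.log (1 - 1 / Real.sqrt 3))
    (hL1 : L1 = ∑ᶠ n, f n) (hL1' : 4 ≤ Real.log L1)
    (hK : (Real.log L1) ^ 4 ≤ K)
    (hK4 : ∑ᶠ a, ∑ᶠ b, ∑ᶠ c, ∑ᶠ d, (if a * b = c * d then f a * f b * f c * f d else 0) ≤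
      K * (∑ᶠ n, f n ^ 2) ^ 2)
    (hl : l + 1 = Real.sqrt (Real.log K) / Real.sqrt (Real.log (Real.log L1)))
    (hV : V = Real.exp ((β / 2 + 5 / 4 * (l + 1)) * Real.log (Real.log L1))) :
    V ^ 2 + V ^ (-(2 * l)) * Real.sqrt K *
        Real.exp ((2 * (l + 1) ^ 2 + β * (l + 1)) * Real.log (Real.log L1)) ≤
      2 * (Real.log L1) ^ β *
        Real.exp (5 / 2 * Real.sqrt (Real.log K) * Real.sqrt (Real.log (Real.log L1))) :=
  stmt_17_general β L1 K l V hL1' hK hl hV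
end
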